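/- arXiv:2109.05514 — 2 statements merged into one kernel-verified Lean document; each statement's English description precedes it below -/
import Mathlib

section
/- (Theorem 1) Let q be an odd prime power with q ≡ 2 (mod 3), and let H be the Hadamard matrix [[I_{q+1} − U_qᵀ, U_q + I_{q+1}], [I_{q+1} + U_qᵀ, U_q − I_{q+1}]]. The 4q+2 vectors r + 2·1̄ ∈ GF(3)^{2q+2}, where r ranges over the rows of H and of −H (reduced mod 3) other than the all-one row of H and its negative, are pairwise distinct (0,1)-codewords of L(q) of weight q+1, and they form the blocks of a 3-(2q+2, q+1, (q−1)/2) design: for every set of 3 distinct coordinate positions, exactly (q−1)/2 of these 4q+2 vectors have entry 1 at all three positions. -/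
open Matrix Finset

/-- The Pless matrix `S_q`, with rows and columns indexed by `GF(q) ∪ {∞}`
(`none` playing the role of `∞`), built from the quadratic character of `GF(q)`. -/
def Smat (F : Type) [Field F] [Fintype F] [DecidableEq F] :
    Matrix (Option F) (Option F) ℤ := fun i j =>
  match i, j with
  | none, none => 0
  | none, some _ => 1
  | some _, none => quadraticChar F (-1)
  | some a, some b => quadraticChar F (a - b)

/-- The matrix `U_q`, obtained from `S_q` by replacing each entry `s_{a,∞}`
(`a ∈ GF(q)`) in the column labeled `∞` by `-1`. -/
def Umat (F : Type) [Field F] [Fintype F] [DecidableEq F] :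
    Matrix (Option F) (Option F) ℤ := fun i j =>
  match i, j with
  | some _, none => -1
  | i, j => Smat F i j

/-- The row of the generator matrix `(I | U_q)` of the code `L(q)`,
reduced modulo 3, indexed by `i : Option F`. -/
def genRowL (F : Type) [Field F] [Fintype F] [DecidableEq F] (i : Option F) :
    (Option F ⊕ Option F) → ZMod 3 := fun j =>
  match j with
  | Sum.inl k => if i = k then 1 else 0
  | Sum.inr k => ((Umat F i k : ℤ) : ZMod 3)

/-- The code `L(q)`: the ternary code of length `2q+2` spanned by the rows of
`(I | U_q)` reduced modulo 3; it is monomially equivalent to the Pless symmetry code. -/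
def Lcode (F : Type) [Field F] [Fintype F] [DecidableEq F] :
    Submodule (ZMod 3) ((Option F ⊕ Option F) → ZMod 3) :=
  Submodule.span (ZMod 3) (Set.range (genRowL F))

/-- The Hadamard matrix `H = [[I − U_qᵀ, U_q + I], [I + U_qᵀ, U_q − I]]`. -/
def Hmat (F : Type) [Field F] [Fintype F] [DecidableEq F] :
    Matrix (Option F ⊕ Option F) (Option F ⊕ Option F) ℤ :=
  Matrix.fromBlocks (1 - (Umat F)ᵀ) (Umat F + 1) (1 + (Umat F)ᵀ) (Umat F - 1)

/-- The vector `r + 2·1̄` over `GF(3)`, where `r` is the row of `H` (if `s = true`)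
or of `−H` (if `s = false`) indexed by `i`, reduced modulo 3. -/
def dvec (F : Type) [Field F] [Fintype F] [DecidableEq F]
    (s : Bool) (i : Option F ⊕ Option F) : (Option F ⊕ Option F) → ZMod 3 := fun j =>
  (if s then 1 else -1) * ((Hmat F i j : ℤ) : ZMod 3) + 2

/-!
Over `ℤ`, the matrix `U = U_q` satisfies `Uᵀ U = U Uᵀ = q I`: off the diagonal this is the
Jacobi-sum identity `∑ₓ χ(x - b) χ(x - c) = -1` for `b ≠ c`. Hence `H` is a Hadamard matrix of
order `2q + 2` whose row `Sum.inl none` is all ones. Modulo 3 we have `q ≡ -1`, so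
`H = [[I - Uᵀ], [I + Uᵀ]] (I | U)` and every row of `H`, the all-one row included, lies in `L(q)`.

The vector `±r + 2·1̄` is the indicator of the entries of `±r` equal to `-1`. Orthogonality of
the rows of `H` makes these vectors distinct and, through orthogonality to the all-one row, of
weight `q + 1`. Orthogonality of the columns makes any three columns agree in exactly
`(2q + 2) / 4` rows; one of them is the all-one row, and each other one gives exactly one block
through the three positions, from `H` or from `-H`.
-/

theorem Matrix.mul_eq_smul_one_comm {n R : Type*} [Fintype n] [DecidableEq n] [CommRing R]
    [IsDomain R] {A B : Matrix n n R} {c : R} (hc : c ≠ 0) (h : A * B = c • 1) :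
    B * A = c • 1 := by
  have hdet : A.det * B.det = c ^ Fintype.card n := by
    rw [← det_mul, h, det_smul, det_one, mul_one]
  have hB : B.det ≠ 0 := right_ne_zero_of_mul (hdet ▸ pow_ne_zero _ hc)
  have hker : (B * A - c • 1) * B = 0 := by
    rw [sub_mul, Matrix.mul_assoc, h, Matrix.mul_smul, Matrix.smul_mul, Matrix.mul_one,
      Matrix.one_mul, sub_self]
  have hsmul : B.det • (B * A - c • 1) = 0 := by
    rw [← Matrix.mul_one (B * A - c • 1), ← Matrix.mul_smul, ← mul_adjugate, ← Matrix.mul_assoc,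
      hker, Matrix.zero_mul]
  exact sub_eq_zero.mp ((smul_eq_zero.mp hsmul).resolve_left hB)

theorem Matrix.fromBlocks_eq_fromRows_mul_fromCols {n R : Type*} [Fintype n] [DecidableEq n]
    [Ring R] {U : Matrix n n R} (hU : Uᵀ * U = -1) :
    fromBlocks (1 - Uᵀ) (U + 1) (1 + Uᵀ) (U - 1) = fromRows (1 - Uᵀ) (1 + Uᵀ) * fromCols 1 U := by
  rw [fromRows_mul_fromCols, fromBlocks_inj]
  simp only [Matrix.mul_one, Matrix.sub_mul, Matrix.add_mul, Matrix.one_mul, hU, true_and]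
  exact ⟨by abel, by abel⟩

section SignMatrix

variable {m n : Type*}

theorem two_mul_card_filter_eq_of_sum_eq_zero [Fintype n] {v : n → ℤ}
    (hv : ∀ j, v j = 1 ∨ v j = -1) (hsum : ∑ j, v j = 0) {c : ℤ} (hc : c = 1 ∨ c = -1) :
    2 * #{j | v j = c} = Fintype.card n := by
  wlog hc1 : c = 1 generalizing v c
  · have hc' : c = -1 := hc.resolve_left hc1
    have := this (v := -v) (fun j => by rcases hv j with h | h <;> simp [h])
      (by simp [hsum]) (Or.inl rfl) rfl
    simpa [hc', neg_eq_iff_eq_neg] using this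
  subst hc1
  have hv' : ∀ j, v j = 2 * (if v j = 1 then 1 else 0) - 1 := fun j => by
    rcases hv j with h | h <;> simp [h]
  rw [Fintype.sum_congr _ _ hv', Finset.sum_sub_distrib, ← Finset.mul_sum, Finset.sum_boole,
    Finset.sum_const, Finset.card_univ] at hsum
  simp only [nsmul_eq_mul, mul_one] at hsum
  omega

variable {M : Matrix m n ℤ}

theorem Matrix.sum_row_eq_zero_of_hasOrthogonalRows [Fintype n] (hM : M.HasOrthogonalRows)
    {r : m} (hr : ∀ j, M r j = 1) {i : m} (hi : i ≠ r) : ∑ j, M i j = 0 := by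
  simpa [dotProduct, hr] using hM hi

theorem Matrix.eq_and_eq_of_smul_row_eq_smul_row [Fintype n] [Nonempty n]
    (hM : ∀ i j, M i j = 1 ∨ M i j = -1) (horth : M.HasOrthogonalRows) {a a' : ℤ} (ha : a ≠ 0)
    {i i' : m} (h : a • M i = a' • M i') : a = a' ∧ i = i' := by
  have hself : ∀ k, M k ⬝ᵥ M k = Fintype.card n := fun k => by
    rw [dotProduct, ← Finset.card_univ, Finset.cast_card]
    exact Fintype.sum_congr _ _ fun j => by rcases hM k j with h | h <;> simp [h]
  have hcard : (Fintype.card n : ℤ) ≠ 0 := by exact_mod_cast Fintype.card_ne_zero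
  have hdot := congrArg (· ⬝ᵥ M i) h
  simp only [smul_dotProduct, hself, smul_eq_mul] at hdot
  by_cases hii : i = i'
  · subst hii
    rw [hself] at hdot
    exact ⟨mul_right_cancel₀ hcard hdot, rfl⟩
  · rw [horth (Ne.symm hii), mul_zero] at hdot
    exact absurd hdot (mul_ne_zero ha hcard)

theorem Matrix.four_mul_card_filter_eq_of_hasOrthogonalCols [Fintype m]
    (hM : ∀ i j, M i j = 1 ∨ M i j = -1) (horth : M.HasOrthogonalCols) {j₁ j₂ j₃ : n}
    (h₁₂ : j₁ ≠ j₂) (h₁₃ : j₁ ≠ j₃) (h₂₃ : j₂ ≠ j₃) :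
    4 * #{i | M i j₂ = M i j₁ ∧ M i j₃ = M i j₁} = Fintype.card m := by
  have hcol : ∀ {j j'}, j ≠ j' → ∑ i, M i j * M i j' = 0 := fun h => horth h
  -- for signs `a b c`, `1 + a b + a c + b c` is `4` if `a = b = c` and `0` otherwise
  have hpoint : ∀ i, 1 + M i j₁ * M i j₂ + M i j₁ * M i j₃ + M i j₂ * M i j₃
      = 4 * if M i j₂ = M i j₁ ∧ M i j₃ = M i j₁ then 1 else 0 := fun i => by
    rcases hM i j₁ with h₁ | h₁ <;> rcases hM i j₂ with h₂ | h₂ <;>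
      rcases hM i j₃ with h₃ | h₃ <;> simp [h₁, h₂, h₃]
  have hsum := Finset.sum_congr rfl fun i (_ : i ∈ univ) => hpoint i
  simp only [Finset.sum_add_distrib, hcol h₁₂, hcol h₁₃, hcol h₂₃, ← Finset.mul_sum,
    Finset.sum_boole, Finset.sum_const, Finset.card_univ, nsmul_eq_mul, mul_one] at hsum
  omega

end SignMatrix

section QuadraticChar

variable {F : Type} [Field F] [Fintype F] [DecidableEq F]

theorem quadraticChar_sum_sub (hF : ringChar F ≠ 2) (b : F) :
    ∑ x : F, quadraticChar F (x - b) = 0 :=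
  (Fintype.sum_equiv (Equiv.subRight b) _ _ fun _ => rfl).trans (quadraticChar_sum_zero hF)

theorem quadraticChar_sum_mul_sub_of_ne (hF : ringChar F ≠ 2) {b c : F} (hbc : b ≠ c) :
    ∑ x : F, quadraticChar F (x - b) * quadraticChar F (x - c) = -1 := by
  set χ := quadraticChar F
  have hd : c - b ≠ 0 := sub_ne_zero.mpr hbc.symm
  have hJ : jacobiSum χ χ = -χ (-1) := by
    simpa only [(quadraticChar_isQuadratic F).inv] using
      jacobiSum_nontrivial_inv (quadraticChar_ne_one hF)
  have hbij : Function.Bijective fun y : F => b + (c - b) * y :=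
    ((Equiv.mulLeft₀ _ hd).trans (Equiv.addLeft b)).bijective
  -- substitute `x = b + (c - b) y` to reach the Jacobi sum `∑ χ y χ (1 - y)`
  calc ∑ x, χ (x - b) * χ (x - c)
      = ∑ y, χ ((c - b) * y) * χ ((c - b) * (-1) * (1 - y)) :=
        (Fintype.sum_bijective _ hbij _ _ fun y => by ring_nf).symm
    _ = ∑ y, χ (-1) * (χ y * χ (1 - y)) := by
        refine Fintype.sum_congr _ _ fun y => ?_
        simp only [map_mul]
        linear_combination (χ (-1) * χ y * χ (1 - y)) * quadraticChar_sq_one hd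
    _ = -1 := by
        rw [← Finset.mul_sum, ← jacobiSum, hJ]
        linear_combination -quadraticChar_sq_one (neg_ne_zero.mpr (one_ne_zero (α := F)))

theorem quadraticChar_sum_sub_mul_self (b : F) :
    ∑ x : F, quadraticChar F (x - b) * quadraticChar F (x - b) = Fintype.card F - 1 := by
  rw [Finset.sum_eq_sum_sdiff_singleton_add (mem_univ b), sub_self, quadraticChar_zero,
    mul_zero, add_zero, Finset.sum_congr rfl fun x hx => by
      rw [← sq, quadraticChar_sq_one (sub_ne_zero.mpr (by simpa using hx))]]
  simp [Finset.card_sdiff, Nat.cast_sub Fintype.card_pos]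

end QuadraticChar

section Umat

variable {F : Type} [Field F] [Fintype F] [DecidableEq F]

@[simp] theorem Umat_none_none : Umat F none none = 0 := rfl
@[simp] theorem Umat_none_some (b : F) : Umat F none (some b) = 1 := rfl
@[simp] theorem Umat_some_none (a : F) : Umat F (some a) none = -1 := rfl
@[simp] theorem Umat_some_some (a b : F) : Umat F (some a) (some b) = quadraticChar F (a - b) :=
  rfl

theorem Umat_transpose_mul_self (hF : ringChar F ≠ 2) :
    (Umat F)ᵀ * Umat F = (Fintype.card F : ℤ) • 1 := by
  ext (_ | b) (_ | c) <;>
    simp only [mul_apply, transpose_apply, Fintype.sum_option, Matrix.smul_apply, one_apply,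
      Umat_none_none, Umat_none_some, Umat_some_none, Umat_some_some, neg_one_mul, mul_neg_one,
      Finset.sum_neg_distrib, quadraticChar_sum_sub hF]
  case some.some =>
    by_cases hbc : b = c
    · rw [hbc, quadraticChar_sum_sub_mul_self]; simp
    · rw [quadraticChar_sum_mul_sub_of_ne hF hbc]; simp [hbc]
  all_goals simp

theorem Umat_mul_transpose_self (hF : ringChar F ≠ 2) :
    Umat F * (Umat F)ᵀ = (Fintype.card F : ℤ) • 1 :=
  Matrix.mul_eq_smul_one_comm (by exact_mod_cast Fintype.card_ne_zero)
    (Umat_transpose_mul_self hF)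

theorem Umat_apply_self (i : Option F) : Umat F i i = 0 := by
  cases i <;> simp

theorem Umat_apply_eq_one_or_neg_one {i j : Option F} (h : i ≠ j) :
    Umat F i j = 1 ∨ Umat F i j = -1 := by
  rcases i with _ | a <;> rcases j with _ | b
  · exact absurd rfl h
  · exact Or.inl rfl
  · exact Or.inr rfl
  · exact_mod_cast quadraticChar_dichotomy (sub_ne_zero.mpr fun hab => h (congrArg some hab))

theorem Hmat_mul_transpose_self (hF : ringChar F ≠ 2) :
    Hmat F * (Hmat F)ᵀ = (2 * Fintype.card F + 2 : ℤ) • 1 := by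
  rw [Hmat, fromBlocks_transpose, fromBlocks_multiply, ← fromBlocks_one, fromBlocks_smul,
    fromBlocks_inj]
  simp only [transpose_sub, transpose_add, transpose_one, transpose_transpose, Matrix.mul_sub,
    Matrix.sub_mul, Matrix.mul_add, Matrix.add_mul, Matrix.mul_one, Matrix.one_mul,
    Umat_mul_transpose_self hF, Umat_transpose_mul_self hF, smul_zero]
  exact ⟨by module, by abel, by abel, by module⟩

theorem Hmat_transpose_mul_self (hF : ringChar F ≠ 2) :
    (Hmat F)ᵀ * Hmat F = (2 * Fintype.card F + 2 : ℤ) • 1 :=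
  Matrix.mul_eq_smul_one_comm (by positivity) (Hmat_mul_transpose_self hF)

theorem Hmat_apply_eq_one_or_neg_one (i j : Option F ⊕ Option F) :
    Hmat F i j = 1 ∨ Hmat F i j = -1 := by
  rcases i with k | k <;> rcases j with l | l <;>
    simp only [Hmat, fromBlocks_apply₁₁, fromBlocks_apply₁₂, fromBlocks_apply₂₁,
      fromBlocks_apply₂₂, Matrix.sub_apply, Matrix.add_apply, one_apply, transpose_apply] <;>
    by_cases hkl : k = l
  all_goals first
    | (subst hkl; simp [Umat_apply_self])
    | (rcases Umat_apply_eq_one_or_neg_one hkl with h | h <;>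
        rcases Umat_apply_eq_one_or_neg_one (Ne.symm hkl) with h' | h' <;> simp [hkl, h, h'])

theorem Hmat_inl_none_apply (j : Option F ⊕ Option F) : Hmat F (Sum.inl none) j = 1 := by
  rcases j with (_ | _) | (_ | _) <;> simp [Hmat, one_apply]

end Umat

section Code

variable {F : Type} [Field F] [Fintype F] [DecidableEq F]

theorem genRowL_eq_fromCols :
    genRowL F = fromCols 1 ((Umat F).map (Int.cast : ℤ → ZMod 3)) := by
  ext i (k | k) <;> simp [genRowL, one_apply]

theorem Hmat_map_intCast {R : Type*} [Ring R] :
    (Hmat F).map (Int.cast : ℤ → R) = fromBlocks (1 - ((Umat F).map Int.cast)ᵀ)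
      ((Umat F).map Int.cast + 1) (1 + ((Umat F).map Int.cast)ᵀ) ((Umat F).map Int.cast - 1) := by
  simp [Hmat, fromBlocks_map, Matrix.map_sub, Matrix.map_add, transpose_map]

theorem Umat_map_transpose_mul_self (hF : ringChar F ≠ 2)
    (h3 : (Fintype.card F : ZMod 3) = -1) :
    ((Umat F).map (Int.cast : ℤ → ZMod 3))ᵀ * (Umat F).map Int.cast = -1 := by
  have hmap : ((Umat F).map (Int.cast : ℤ → ZMod 3))ᵀ * (Umat F).map Int.cast =
      ((Umat F)ᵀ * Umat F).map (Int.castRingHom (ZMod 3)) := by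
    rw [Matrix.map_mul, transpose_map]; rfl
  ext i j
  rw [hmap, Umat_transpose_mul_self hF, map_apply, Matrix.smul_apply, neg_apply, one_apply,
    one_apply]
  split_ifs <;> simp [h3]

theorem Hmat_row_mem_Lcode (hF : ringChar F ≠ 2) (h3 : (Fintype.card F : ZMod 3) = -1)
    (i : Option F ⊕ Option F) : (fun j => (Hmat F i j : ZMod 3)) ∈ Lcode F := by
  have hrow : (fun j => (Hmat F i j : ZMod 3)) = (Hmat F).map Int.cast i := rfl
  rw [hrow, Hmat_map_intCast,
    Matrix.fromBlocks_eq_fromRows_mul_fromCols (Umat_map_transpose_mul_self hF h3), Lcode,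
    genRowL_eq_fromCols]
  change _ ∈ Submodule.span (ZMod 3) (Set.range (Matrix.row _))
  rw [← range_vecMulLinear]
  exact ⟨_, rfl⟩

theorem dvec_mem_Lcode (hF : ringChar F ≠ 2) (h3 : (Fintype.card F : ZMod 3) = -1)
    (s : Bool) (i : Option F ⊕ Option F) : dvec F s i ∈ Lcode F := by
  have hdecomp : dvec F s i = (if s then (1 : ZMod 3) else -1) • (fun j => (Hmat F i j : ZMod 3)) +
      (2 : ZMod 3) • fun j => (Hmat F (Sum.inl none) j : ZMod 3) := by
    ext j
    cases s <;> simp [dvec, Hmat_inl_none_apply]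
  rw [hdecomp]
  exact add_mem (Submodule.smul_mem _ (if s then 1 else -1) (Hmat_row_mem_Lcode hF h3 i))
    (Submodule.smul_mem _ _ (Hmat_row_mem_Lcode hF h3 _))

end Code

section Blocks

variable {F : Type} [Field F] [Fintype F] [DecidableEq F]

theorem Hmat_hasOrthogonalRows (hF : ringChar F ≠ 2) : (Hmat F).HasOrthogonalRows :=
  mul_transpose_self_isDiag_iff_hasOrthogonalRows.mp
    (Hmat_mul_transpose_self hF ▸ isDiag_smul_one _ _)

theorem Hmat_hasOrthogonalCols (hF : ringChar F ≠ 2) : (Hmat F).HasOrthogonalCols :=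
  transpose_mul_self_isDiag_iff_hasOrthogonalCols.mp
    (Hmat_transpose_mul_self hF ▸ isDiag_smul_one _ _)

theorem dvec_apply (s : Bool) (i j : Option F ⊕ Option F) :
    dvec F s i j = if Hmat F i j = (if s then 1 else -1) then 0 else 1 := by
  rcases Hmat_apply_eq_one_or_neg_one i j with h | h <;> cases s <;> simp [dvec, h] <;> decide

theorem dvec_apply_eq_one_iff {s : Bool} {i j : Option F ⊕ Option F} :
    dvec F s i j = 1 ↔ Hmat F i j = if s then -1 else 1 := by
  rcases Hmat_apply_eq_one_or_neg_one i j with h | h <;> cases s <;> simp [dvec_apply, h]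

theorem eq_and_eq_of_dvec_eq (hF : ringChar F ≠ 2) {s s' : Bool} {i i' : Option F ⊕ Option F}
    (h : dvec F s i = dvec F s' i') : s = s' ∧ i = i' := by
  have hrow : (if s then 1 else -1 : ℤ) • Hmat F i = (if s' then 1 else -1 : ℤ) • Hmat F i' := by
    ext j
    have hj := congrFun h j
    rw [dvec_apply, dvec_apply] at hj
    rcases Hmat_apply_eq_one_or_neg_one i j with h₁ | h₁ <;>
      rcases Hmat_apply_eq_one_or_neg_one i' j with h₂ | h₂ <;>
      cases s <;> cases s' <;> simp_all
  obtain ⟨hs, hi⟩ := (Hmat F).eq_and_eq_of_smul_row_eq_smul_row Hmat_apply_eq_one_or_neg_one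
    (Hmat_hasOrthogonalRows hF) (by cases s <;> simp) hrow
  exact ⟨by cases s <;> cases s' <;> simp_all, hi⟩

theorem card_dvec_ne_zero (hF : ringChar F ≠ 2) (s : Bool) {i : Option F ⊕ Option F}
    (hi : i ≠ Sum.inl none) : #{j | dvec F s i j ≠ 0} = Fintype.card F + 1 := by
  have hbal := two_mul_card_filter_eq_of_sum_eq_zero (Hmat_apply_eq_one_or_neg_one i)
    (sum_row_eq_zero_of_hasOrthogonalRows (Hmat_hasOrthogonalRows hF) Hmat_inl_none_apply hi)
    (c := if s then -1 else 1) (by cases s <;> simp)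
  have hfilter : univ.filter (fun j => dvec F s i j ≠ 0) =
      univ.filter (fun j => Hmat F i j = if s then -1 else 1) := by
    refine Finset.filter_congr fun j _ => ?_
    rw [← dvec_apply_eq_one_iff, dvec_apply]
    split_ifs <;> simp
  simp only [Fintype.card_sum, Fintype.card_option] at hbal
  rw [hfilter]
  omega

theorem card_filter_dvec_eq_one (hF : ringChar F ≠ 2) {j₁ j₂ j₃ : Option F ⊕ Option F}
    (h₁₂ : j₁ ≠ j₂) (h₁₃ : j₁ ≠ j₃) (h₂₃ : j₂ ≠ j₃) :
    #{p : Bool × (Option F ⊕ Option F) | p.2 ≠ Sum.inl none ∧ dvec F p.1 p.2 j₁ = 1 ∧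
      dvec F p.1 p.2 j₂ = 1 ∧ dvec F p.1 p.2 j₃ = 1} = (Fintype.card F - 1) / 2 := by
  have hagree := four_mul_card_filter_eq_of_hasOrthogonalCols Hmat_apply_eq_one_or_neg_one
    (Hmat_hasOrthogonalCols hF) h₁₂ h₁₃ h₂₃
  set A := univ.filter fun i => Hmat F i j₂ = Hmat F i j₁ ∧ Hmat F i j₃ = Hmat F i j₁
  have hmem : Sum.inl none ∈ A := by simp [A, Hmat_inl_none_apply]
  -- a row agreeing on `j₁, j₂, j₃` gives a block through them for exactly one sign
  have hbij : #{p : Bool × (Option F ⊕ Option F) | p.2 ≠ Sum.inl none ∧ dvec F p.1 p.2 j₁ = 1 ∧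
      dvec F p.1 p.2 j₂ = 1 ∧ dvec F p.1 p.2 j₃ = 1} = #(A.erase (Sum.inl none)) := by
    refine Finset.card_nbij' Prod.snd (fun i => (decide (Hmat F i j₁ = -1), i)) ?_ ?_ ?_ ?_
    · rintro ⟨s, i⟩ hp
      simp_all [A, dvec_apply_eq_one_iff]
    · intro i hi
      simp only [A, coe_erase, coe_filter, Set.mem_sdiff, Set.mem_ofPred_eq,
        Set.mem_singleton_iff] at hi
      rcases Hmat_apply_eq_one_or_neg_one i j₁ with h | h <;> simp_all [dvec_apply_eq_one_iff]
    · rintro ⟨s, i⟩ hp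
      cases s <;> simp_all [dvec_apply_eq_one_iff]
    · intro i _
      rfl
  simp only [Fintype.card_sum, Fintype.card_option] at hagree
  rw [hbij, card_erase_of_mem hmem]
  omega

end Blocks

/-- (Theorem 1) For an odd prime power `q ≡ 2 (mod 3)`, the `4q+2` vectors `r + 2·1̄`,
where `r` ranges over the rows of `H` and of `−H` (mod 3) other than the all-one row of
`H` (indexed by `Sum.inl none`) and its negative, are pairwise distinct `(0,1)`-codewords
of `L(q)` of weight `q+1`, and they form the blocks of a `3-(2q+2, q+1, (q−1)/2)` design:
every set of 3 distinct coordinate positions is covered by exactly `(q−1)/2` of them. -/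
theorem stmt_5 (q : ℕ) (hq : Odd q) (h3 : q % 3 = 2)
    (F : Type) [Field F] [Fintype F] [DecidableEq F] (hF : Fintype.card F = q) :
    -- the 4q+2 vectors are pairwise distinct
    (∀ (s s' : Bool) (i i' : Option F ⊕ Option F), i ≠ Sum.inl none → i' ≠ Sum.inl none →
      dvec F s i = dvec F s' i' → s = s' ∧ i = i') ∧
    ((Finset.univ.filter (fun p : Bool × (Option F ⊕ Option F) => p.2 ≠ Sum.inl none)).image
      (fun p => dvec F p.1 p.2)).card = 4 * q + 2 ∧
    -- each is a (0,1)-codeword of L(q) of weight q+1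
    (∀ (s : Bool) (i : Option F ⊕ Option F), i ≠ Sum.inl none →
      dvec F s i ∈ Lcode F ∧
      (∀ j, dvec F s i j = 0 ∨ dvec F s i j = 1) ∧
      (Finset.univ.filter (fun j => dvec F s i j ≠ 0)).card = q + 1) ∧
    -- they form a 3-(2q+2, q+1, (q−1)/2) design
    (∀ j₁ j₂ j₃ : Option F ⊕ Option F, j₁ ≠ j₂ → j₁ ≠ j₃ → j₂ ≠ j₃ →
      (Finset.univ.filter (fun p : Bool × (Option F ⊕ Option F) =>
        p.2 ≠ Sum.inl none ∧ dvec F p.1 p.2 j₁ = 1 ∧ dvec F p.1 p.2 j₂ = 1 ∧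
          dvec F p.1 p.2 j₃ = 1)).card = (q - 1) / 2) := by
  subst hF
  have hF : ringChar F ≠ 2 := fun h => by
    have := FiniteField.even_card_iff_char_two.mp h
    rw [Nat.odd_iff] at hq
    omega
  have h3 : (Fintype.card F : ZMod 3) = -1 := by
    rw [← ZMod.natCast_mod, h3]
    rfl
  refine ⟨fun s s' i i' _ _ h => eq_and_eq_of_dvec_eq hF h, ?_,
    fun s i hi => ⟨dvec_mem_Lcode hF h3 s i, fun j => ?_, card_dvec_ne_zero hF s hi⟩,
    fun j₁ j₂ j₃ => card_filter_dvec_eq_one hF⟩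
  · rw [card_image_of_injOn fun p _ p' _ h => Prod.ext_iff.mpr (eq_and_eq_of_dvec_eq hF h)]
    have hprod : univ.filter (fun p : Bool × (Option F ⊕ Option F) => p.2 ≠ Sum.inl none) =
        univ ×ˢ univ.erase (Sum.inl none) := by
      ext; simp
    simp [hprod, card_univ]
    omega
  · rw [dvec_apply]
    split_ifs <;> simp
end

section
/- Let q ≡ 3 (mod 4) be a prime power. The (q+1)×(q+1) integer matrix P, with rows and columns indexed by GF(q) ∪ {∞}, defined by P_{∞,b} = 1 for all b, P_{a,∞} = 1 for all a ∈ GF(q), P_{a,a} = −1 for a ∈ GF(q), and P_{a,b} = χ(b−a) for distinct a, b ∈ GF(q), is a Hadamard matrix of order q+1 (the Paley–Hadamard matrix of type I). -/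
open Matrix Finset

/-!
Off the border, `P = S - I` with `S a b = χ (b - a)`. Every row of `S` sums to `0`, `χ (-1) = -1`
makes `S` skew-symmetric, and two distinct rows of `S` have inner product
`∑ c, χ (c - a) χ (c - b) = -1`, which is a Jacobi sum in disguise. Bordering by the all-one row
and column then turns `S Sᵀ = q I - J` into `P Pᵀ = (q + 1) I`.
-/

/-- The Paley–Hadamard matrix of type I for `GF(q)`, `q ≡ 3 (mod 4)`, with rows and
columns indexed by `GF(q) ∪ {∞}` (`none` playing the role of `∞`): the all-one row and
column border the matrix `S_q − I` on the core `GF(q) × GF(q)`. -/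
def Pmat (F : Type) [Field F] [Fintype F] [DecidableEq F] :
    Matrix (Option F) (Option F) ℤ := fun i j =>
  match i, j with
  | none, _ => 1
  | some _, none => 1
  | some a, some b => if a = b then -1 else quadraticChar F (b - a)

lemma ringChar_ne_two_of_card_mod_four_eq_three {F : Type} [Field F] [Fintype F]
    (h : Fintype.card F % 4 = 3) : ringChar F ≠ 2 := fun h2 => by
  have := FiniteField.even_card_of_char_two (F := F) h2
  omega

section

variable {F : Type} [Field F] [Fintype F] [DecidableEq F]

lemma quadraticChar_neg_one_of_card_mod_four_eq_three (h : Fintype.card F % 4 = 3) :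
    quadraticChar F (-1) = -1 :=
  quadraticChar_neg_one_iff_not_isSquare.mpr <| by
    rw [FiniteField.isSquare_neg_one_iff]
    omega

lemma quadraticChar_sub_swap (h : Fintype.card F % 4 = 3) (a b : F) :
    quadraticChar F (a - b) = -quadraticChar F (b - a) := by
  rw [← neg_sub, ← neg_one_mul, map_mul, quadraticChar_neg_one_of_card_mod_four_eq_three h,
    neg_one_mul]

/-- `∑ χ(x) χ(x - 1) = χ(-1) J(χ, χ)`, and `J(χ, χ) = J(χ, χ⁻¹) = -χ(-1)` as `χ` is quadratic. -/
lemma quadraticChar_sum_mul_sub_one (hF : ringChar F ≠ 2) :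
    ∑ x : F, quadraticChar F x * quadraticChar F (x - 1) = -1 := by
  have hJ : jacobiSum (quadraticChar F) (quadraticChar F) = -quadraticChar F (-1) := by
    have := jacobiSum_nontrivial_inv (quadraticChar_ne_one hF)
    rwa [(quadraticChar_isQuadratic F).inv] at this
  have hflip (x : F) : quadraticChar F (x - 1) = quadraticChar F (-1) * quadraticChar F (1 - x) := by
    rw [← map_mul, neg_one_mul, neg_sub]
  simp_rw [hflip, mul_left_comm _ (quadraticChar F (-1)), ← Finset.mul_sum]
  rw [← jacobiSum, hJ, mul_neg, ← sq, quadraticChar_sq_one (neg_ne_zero.mpr one_ne_zero)]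

lemma quadraticChar_sum_sub_mul_sub (hF : ringChar F ≠ 2) {a b : F} (hab : a ≠ b) :
    ∑ c : F, quadraticChar F (c - a) * quadraticChar F (c - b) = -1 := by
  have hd : b - a ≠ 0 := sub_ne_zero.mpr hab.symm
  rw [← quadraticChar_sum_mul_sub_one hF]
  refine (Fintype.sum_equiv ((Equiv.mulLeft₀ _ hd).trans (Equiv.addLeft a)) _ _ fun x => ?_).symm
  have h₁ : a + (b - a) * x - a = (b - a) * x := by ring
  have h₂ : a + (b - a) * x - b = (b - a) * (x - 1) := by ring
  change _ = quadraticChar F (a + (b - a) * x - a) * quadraticChar F (a + (b - a) * x - b)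
  rw [h₁, h₂, map_mul, map_mul]
  linear_combination -(quadraticChar F x * quadraticChar F (x - 1)) * quadraticChar_sq_one hd

@[simp] lemma Pmat_none (j : Option F) : Pmat F none j = 1 := rfl

@[simp] lemma Pmat_some_none (a : F) : Pmat F (some a) none = 1 := rfl

lemma Pmat_some_some (a b : F) :
    Pmat F (some a) (some b) = quadraticChar F (b - a) - if a = b then 1 else 0 := by
  by_cases hab : a = b <;> simp [Pmat, hab]

lemma Pmat_eq_one_or_neg_one (i j : Option F) : Pmat F i j = 1 ∨ Pmat F i j = -1 := by
  match i, j with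
  | none, _ => exact .inl rfl
  | some _, none => exact .inl rfl
  | some a, some b =>
    by_cases hab : a = b
    · simp [Pmat, hab]
    · simpa [Pmat, hab] using quadraticChar_dichotomy (sub_ne_zero.mpr (Ne.symm hab))

lemma sum_Pmat_some (hF : ringChar F ≠ 2) (a : F) : ∑ c, Pmat F (some a) (some c) = -1 := by
  have hshift : ∑ c, quadraticChar F (c - a) = 0 := by
    rw [← quadraticChar_sum_zero hF]
    exact Fintype.sum_equiv (Equiv.subRight a) _ _ fun _ => rfl
  simp only [Pmat_some_some, Finset.sum_sub_distrib, hshift, Finset.sum_ite_eq, Finset.mem_univ,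
    if_true, zero_sub]

lemma sum_Pmat_some_mul_Pmat_some (h : Fintype.card F % 4 = 3) (a b : F) :
    ∑ c, Pmat F (some a) (some c) * Pmat F (some b) (some c) =
      if a = b then (Fintype.card F : ℤ) else -1 := by
  split_ifs with hab
  · subst hab
    have hsq (c : F) : Pmat F (some a) (some c) * Pmat F (some a) (some c) = 1 := by
      rcases Pmat_eq_one_or_neg_one (some a) (some c) with h | h <;> simp [h]
    simp [hsq]
  · simp only [Pmat_some_some, sub_mul, mul_sub, Finset.sum_sub_distrib,
      quadraticChar_sum_sub_mul_sub (ringChar_ne_two_of_card_mod_four_eq_three h) hab]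
    simp only [mul_ite, ite_mul, mul_one, one_mul, mul_zero, zero_mul, Finset.sum_ite_eq,
      Finset.mem_univ, if_true, if_neg hab, sub_zero, quadraticChar_sub_swap h a b]
    ring

theorem Pmat_mul_transpose (h : Fintype.card F % 4 = 3) :
    Pmat F * (Pmat F)ᵀ = ((Fintype.card F + 1 : ℕ) : ℤ) • (1 : Matrix (Option F) (Option F) ℤ) := by
  have hF := ringChar_ne_two_of_card_mod_four_eq_three h
  ext (_ | a) (_ | b) <;>
    simp [mul_apply, Fintype.sum_option, sum_Pmat_some hF, sum_Pmat_some_mul_Pmat_some h]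
  by_cases hab : a = b <;> simp [hab, one_apply, add_comm]

end

/-- For a prime power `q ≡ 3 (mod 4)`, the matrix `P` (with `P_{∞,b} = 1`,
`P_{a,∞} = 1`, `P_{a,a} = −1`, and `P_{a,b} = χ(b−a)` for distinct `a, b ∈ GF(q)`)
is a Hadamard matrix of order `q+1`. -/
theorem stmt_17 (q : ℕ) (h4 : q % 4 = 3)
    (F : Type) [Field F] [Fintype F] [DecidableEq F] (hF : Fintype.card F = q) :
    (∀ i j, Pmat F i j = 1 ∨ Pmat F i j = -1) ∧
    Pmat F * (Pmat F)ᵀ = ((q + 1 : ℕ) : ℤ) • (1 : Matrix (Option F) (Option F) ℤ) := by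
  subst hF
  exact ⟨Pmat_eq_one_or_neg_one, Pmat_mul_transpose h4⟩
end
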